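/- arXiv:1905.12132 — 4 statements merged into one kernel-verified Lean document; each statement's English description precedes it below -/
import Mathlib

section
/- Let G be a directed graph, and V_I, V_J, V_Z disjoint subsets of its vertices. Let V' be the set of all ancestors of V_I ∪ V_J ∪ V_Z (a node is an ancestor of a set if it equals a member or there is a directed chain from it to a member), and let G' be the restriction of G to V'. Then V_Z d-separates V_I and V_J in G if and only if V_Z d-separates V_I and V_J in G'. -/
/-- `b` is a descendant of `a` (a node is a descendant of itself). -/
def Desc {V : Type*} (E : V → V → Prop) (a b : V) : Prop :=
  Relation.ReflTransGen E a b

/-- The set of ancestors of a set `S` (a node is an ancestor of a set if it equals a member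
or there is a directed chain from it to a member). -/
def Anc {V : Type*} (E : V → V → Prop) (S : Set V) : Set V :=
  {x | ∃ s ∈ S, Relation.ReflTransGen E x s}

/-- `p` is a path from `i` to `j`: a sequence of at least two nodes, consecutive nodes
joined by an edge in either direction, with distinct ordered pairs of consecutive nodes. -/
def IsPath {V : Type*} (E : V → V → Prop) (i j : V) (p : List V) : Prop :=
  p.head? = some i ∧ p.getLast? = some j ∧ 2 ≤ p.length ∧
  (∀ (k : ℕ) (a b : V), p[k]? = some a → p[k + 1]? = some b → (E a b ∨ E b a)) ∧
  (p.zip p.tail).Nodup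

/-- The path `p` is blocked by `Z`: it has an internal node that is a non-collider in `Z`,
or a collider none of whose descendants (including itself) lies in `Z`. -/
def Blocked {V : Type*} (E : V → V → Prop) (Z : Set V) (p : List V) : Prop :=
  ∃ (k : ℕ) (a b c : V), p[k]? = some a ∧ p[k + 1]? = some b ∧ p[k + 2]? = some c ∧
    ((b ∈ Z ∧ ¬(E a b ∧ E c b)) ∨ ((E a b ∧ E c b) ∧ ∀ d, Desc E b d → d ∉ Z))

/-- `Z` d-separates `I` and `J`: every path between a node of `I` and a node of `J`
is blocked by `Z`. -/
def DSep {V : Type*} (E : V → V → Prop) (I Z J : Set V) : Prop :=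
  ∀ i ∈ I, ∀ j ∈ J, ∀ p : List V, IsPath E i j p → Blocked E Z p

/-! On an ancestral set `A ⊇ Z` (closed under parents), restricting `G` to `A` changes neither
the paths that stay inside `A` nor whether they are blocked, because a descendant of a node of `A`
lying in `Z` is reached by a directed chain inside `A`. It remains to see that a path from `I` to
`J` that is not blocked in `G` stays inside `A = Anc (I ∪ J ∪ Z)`: all its colliders have a
descendant in `Z`, and following the arrows along the path from any node ends at an endpoint or
at a collider, so every node is an ancestor of `I ∪ J ∪ Z`. -/

namespace List

variable {α : Type*} {p : List α} {a b c : α}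

theorem pair_infix_iff_getElem? :
    [a, b] <:+: p ↔ ∃ k, p[k]? = some a ∧ p[k + 1]? = some b := by
  rw [infix_iff_getElem?]
  constructor
  · rintro ⟨k, -, h⟩
    exact ⟨k, by simpa using h 0 (by simp), by simpa [add_comm] using h 1 (by simp)⟩
  · rintro ⟨k, ha, hb⟩
    have hk := (getElem?_eq_some_iff.mp hb).1
    refine ⟨k, by simp; omega, fun i hi => ?_⟩
    simp only [length_cons, length_nil] at hi
    interval_cases i
    · simpa using ha
    · simpa [add_comm] using hb

theorem triple_infix_iff_getElem? :
    [a, b, c] <:+: p ↔ ∃ k, p[k]? = some a ∧ p[k + 1]? = some b ∧ p[k + 2]? = some c := by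
  rw [infix_iff_getElem?]
  constructor
  · rintro ⟨k, -, h⟩
    exact ⟨k, by simpa using h 0 (by simp), by simpa [add_comm] using h 1 (by simp),
      by simpa [add_comm] using h 2 (by simp)⟩
  · rintro ⟨k, ha, hb, hc⟩
    have hk := (getElem?_eq_some_iff.mp hc).1
    refine ⟨k, by simp; omega, fun i hi => ?_⟩
    simp only [length_cons, length_nil] at hi
    interval_cases i
    · simpa using ha
    · simpa [add_comm] using hb
    · simpa [add_comm] using hc

theorem forall_mem_of_forall_pair_infix {P : α → Prop} (hp : 2 ≤ p.length)
    (h : ∀ a b, [a, b] <:+: p → P a ∧ P b) : ∀ x ∈ p, P x := by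
  induction p with
  | nil => simp
  | cons a q ih =>
    obtain ⟨b, r, rfl⟩ := exists_cons_of_length_pos (by simp at hp; omega : 0 < q.length)
    have hab := h a b ⟨[], r, rfl⟩
    intro x hx
    rcases mem_cons.mp hx with rfl | hx
    · exact hab.1
    · rcases r with _ | ⟨c, r⟩
      · simp_all
      · exact ih (by simp) (fun u v huv => h u v (infix_cons huv)) x hx

end List

section DSeparation

variable {V : Type*} {E : V → V → Prop}

def Induced (E : V → V → Prop) (A : Set V) : V → V → Prop :=
  fun a b => E a b ∧ a ∈ A ∧ b ∈ A

def IsAncestral (E : V → V → Prop) (A : Set V) : Prop :=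
  ∀ ⦃x y⦄, E x y → y ∈ A → x ∈ A

theorem isAncestral_anc (S : Set V) : IsAncestral E (Anc E S) :=
  fun _ _ hxy ⟨s, hs, hys⟩ => ⟨s, hs, .head hxy hys⟩

theorem subset_anc (S : Set V) : S ⊆ Anc E S :=
  fun x hx => ⟨x, hx, .refl⟩

theorem isPath_induced_iff {A : Set V} {i j : V} {p : List V} :
    IsPath (Induced E A) i j p ↔ IsPath E i j p ∧ ∀ x ∈ p, x ∈ A := by
  constructor
  · rintro ⟨hi, hj, hlen, hadj, hnd⟩
    refine ⟨⟨hi, hj, hlen, fun k a b ha hb => (hadj k a b ha hb).imp And.left And.left, hnd⟩,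
      List.forall_mem_of_forall_pair_infix hlen fun a b hab => ?_⟩
    obtain ⟨k, ha, hb⟩ := List.pair_infix_iff_getElem?.mp hab
    rcases hadj k a b ha hb with h | h
    exacts [h.2, h.2.symm]
  · rintro ⟨⟨hi, hj, hlen, hadj, hnd⟩, hpA⟩
    refine ⟨hi, hj, hlen, fun k a b ha hb => ?_, hnd⟩
    have ha' := hpA a (List.mem_of_getElem? ha)
    have hb' := hpA b (List.mem_of_getElem? hb)
    exact (hadj k a b ha hb).imp (⟨·, ha', hb'⟩) (⟨·, hb', ha'⟩)

namespace IsAncestral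

variable {A : Set V} (hA : IsAncestral E A)
include hA

theorem reflTransGen_induced {b d : V} (h : Relation.ReflTransGen E b d) :
    d ∈ A → Relation.ReflTransGen (Induced E A) b d := by
  induction h with
  | refl => exact fun _ => .refl
  | tail _ hcd ih => exact fun hd => (ih (hA hcd hd)).tail ⟨hcd, hA hcd hd, hd⟩

theorem blocked_induced_iff {Z : Set V} {p : List V} (hZ : Z ⊆ A) (hp : ∀ x ∈ p, x ∈ A) :
    Blocked (Induced E A) Z p ↔ Blocked E Z p := by
  have hrel : ∀ {a b}, a ∈ p → b ∈ p → (Induced E A a b ↔ E a b) :=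
    fun ha hb => ⟨And.left, fun h => ⟨h, hp _ ha, hp _ hb⟩⟩
  have hdesc : ∀ b, (∀ d, Desc (Induced E A) b d → d ∉ Z) ↔ ∀ d, Desc E b d → d ∉ Z :=
    fun b => ⟨fun h d hbd hdZ => h d (hA.reflTransGen_induced hbd (hZ hdZ)) hdZ,
      fun h d hbd => h d (Relation.ReflTransGen.mono (fun _ _ => And.left) _ _ hbd)⟩
  unfold Blocked
  refine exists_congr fun k => exists_congr fun a => exists_congr fun b => exists_congr fun c => ?_
  refine and_congr_right fun ha => and_congr_right fun hb => and_congr_right fun hc => ?_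
  have ha := List.mem_of_getElem? ha
  have hb := List.mem_of_getElem? hb
  have hc := List.mem_of_getElem? hc
  rw [hrel ha hb, hrel hc hb, hdesc]

theorem mem_of_forward_edge {p : List V} (hadj : ∀ a b, [a, b] <:+: p → E a b ∨ E b a)
    (hcol : ∀ a b c, [a, b, c] <:+: p → E a b → E c b → b ∈ A)
    (hlast : ∀ x ∈ p.getLast?, x ∈ A) {x y : V} (hxy : [x, y] <:+: p) (h : E x y) : y ∈ A := by
  induction p generalizing x y with
  | nil => simp at hxy
  | cons w q ih =>
    have ih : ∀ {x y}, [x, y] <:+: q → E x y → y ∈ A :=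
      ih (fun a b hab => hadj a b (List.infix_cons hab))
        (fun a b c habc => hcol a b c (List.infix_cons habc))
        (fun x hx => hlast x (by cases q <;> simp_all))
    rcases List.infix_cons_iff.mp hxy with hpre | hinf
    · obtain ⟨rfl, r, hr⟩ : x = w ∧ [y] <+: q := by simpa using hpre
      subst hr
      rcases r with _ | ⟨z, r⟩
      · simpa using hlast
      · rcases hadj y z ⟨[x], r, rfl⟩ with hyz | hzy
        · exact hA hyz (ih ⟨[], r, rfl⟩ hyz)
        · exact hcol x y z ⟨[], r, rfl⟩ h hzy
    · exact ih hinf h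

theorem mem_of_backward_edge {p : List V}
    (hadj : ∀ a b, [a, b] <:+: p → E a b ∨ E b a)
    (hcol : ∀ a b c, [a, b, c] <:+: p → E a b → E c b → b ∈ A)
    (hhead : ∀ x ∈ p.head?, x ∈ A) {x y : V} (hxy : [x, y] <:+: p) (h : E y x) : x ∈ A := by
  have rev : ∀ {l}, l <:+: p.reverse → l.reverse <:+: p :=
    fun hl => List.reverse_infix.mp (by rwa [List.reverse_reverse])
  refine hA.mem_of_forward_edge (p := p.reverse) (fun a b hab => (hadj b a (rev hab)).symm)
    (fun a b c habc hab hcb => hcol c b a (rev habc) hcb hab) (by simpa using hhead) ?_ h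
  simpa using List.reverse_infix.mpr hxy

theorem forall_mem_of_colliders_mem {p : List V} (hlen : 2 ≤ p.length)
    (hadj : ∀ a b, [a, b] <:+: p → E a b ∨ E b a)
    (hcol : ∀ a b c, [a, b, c] <:+: p → E a b → E c b → b ∈ A)
    (hhead : ∀ x ∈ p.head?, x ∈ A) (hlast : ∀ x ∈ p.getLast?, x ∈ A) : ∀ x ∈ p, x ∈ A :=
  List.forall_mem_of_forall_pair_infix hlen fun a b hab => by
    rcases hadj a b hab with h | h
    · have hb := hA.mem_of_forward_edge hadj hcol hlast hab h
      exact ⟨hA h hb, hb⟩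
    · have ha := hA.mem_of_backward_edge hadj hcol hhead hab h
      exact ⟨ha, hA h ha⟩

end IsAncestral

theorem IsPath.forall_mem_anc_of_not_blocked {S Z : Set V} {i j : V} {p : List V}
    (hp : IsPath E i j p) (hnb : ¬Blocked E Z p) (hi : i ∈ S) (hj : j ∈ S) (hZ : Z ⊆ S) :
    ∀ x ∈ p, x ∈ Anc E S := by
  obtain ⟨hhead, hlast, hlen, hadj, -⟩ := hp
  refine (isAncestral_anc S).forall_mem_of_colliders_mem hlen (fun a b hab => ?_)
    (fun a b c habc hab hcb => ?_) (by simpa [hhead] using subset_anc S hi)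
    (by simpa [hlast] using subset_anc S hj)
  · obtain ⟨k, ha, hb⟩ := List.pair_infix_iff_getElem?.mp hab
    exact hadj k a b ha hb
  · obtain ⟨k, ha, hb, hc⟩ := List.triple_infix_iff_getElem?.mp habc
    obtain ⟨d, hbd, hdZ⟩ : ∃ d, Desc E b d ∧ d ∈ Z := by
      by_contra! h
      exact hnb ⟨k, a, b, c, ha, hb, hc, .inr ⟨⟨hab, hcb⟩, h⟩⟩
    exact ⟨d, hZ hdZ, hbd⟩

end DSeparation

theorem dsep_iff_dsep_restrict_anc_general {V : Type*} (E : V → V → Prop) (I Z J : Set V) :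
    DSep E I Z J ↔
      DSep (fun a b => E a b ∧ a ∈ Anc E (I ∪ J ∪ Z) ∧ b ∈ Anc E (I ∪ J ∪ Z)) I Z J := by
  set A := Anc E (I ∪ J ∪ Z)
  have hA : IsAncestral E A := isAncestral_anc _
  have hZA : Z ⊆ A := Set.subset_union_right.trans (subset_anc _)
  refine forall₂_congr fun i hi => forall₂_congr fun j hj => forall_congr' fun p => ?_
  change _ ↔ (IsPath (Induced E A) i j p → Blocked (Induced E A) Z p)
  rw [isPath_induced_iff]
  constructor
  · rintro hblocked ⟨hp, hpA⟩
    exact (hA.blocked_induced_iff hZA hpA).mpr (hblocked hp)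
  · intro hblocked hp
    by_contra hnb
    have hpA : ∀ x ∈ p, x ∈ A := hp.forall_mem_anc_of_not_blocked hnb (Or.inl (Or.inl hi))
      (Or.inl (Or.inr hj)) Set.subset_union_right
    exact hnb ((hA.blocked_induced_iff hZA hpA).mp (hblocked ⟨hp, hpA⟩))

/-- `V_Z` d-separates `V_I` and `V_J` in `G` iff it does so in the
restriction of `G` to the ancestors of `V_I ∪ V_J ∪ V_Z`. -/
theorem dsep_iff_dsep_restrict_anc {V : Type*} (E : V → V → Prop) (I Z J : Set V)
    (hIZ : Disjoint I Z) (hIJ : Disjoint I J) (hJZ : Disjoint J Z) :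
    DSep E I Z J ↔
      DSep (fun a b => E a b ∧ a ∈ Anc E (I ∪ J ∪ Z) ∧ b ∈ Anc E (I ∪ J ∪ Z)) I Z J :=
  dsep_iff_dsep_restrict_anc_general E I Z J
end

section
/- Marginalization preserves absent chains: let Q be an n×n matrix over a field partitioned by disjoint index sets I and J with I − Q_{II} invertible, and define Q'_{JI} = Q_{JI}(I − Q_{II})⁻¹. Let i ∈ I and j ∈ J. If Q_{ji} = 0 and there is no chain i → π₁ → ... → π_ℓ → j (ℓ ≥ 1) with all internal nodes π₁,...,π_ℓ ∈ I in the graph whose edges are the nonzero entries of Q, then [Q'_{JI}]_{ji} = 0. -/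
open Polynomial Matrix

lemma pow_entry_chain {K : Type*} [Field K] {n : ℕ} (Q : Matrix (Fin n) (Fin n) K)
    (I : Finset (Fin n)) (i : Fin n) (hi : i ∈ I) :
    ∀ (m : ℕ) (a : {x // x ∈ I}),
    ((Q.submatrix (Subtype.val : {x // x ∈ I} → Fin n) Subtype.val) ^ m) a ⟨i, hi⟩ ≠ 0 →
    ∃ π : ℕ → Fin n, π 0 = i ∧ π m = a ∧ (∀ p ≤ m, π p ∈ I) ∧
      ∀ p < m, Q (π (p + 1)) (π p) ≠ 0 := by
  intro m
  induction m with
  | zero =>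
    intro a h
    rw [pow_zero] at h
    have ha : a = ⟨i, hi⟩ := by
      by_contra hne
      exact h (Matrix.one_apply_ne hne)
    refine ⟨fun _ => i, rfl, by simp [ha], fun p _ => hi, fun p hp => absurd hp (by omega)⟩
  | succ m ih =>
    intro a h
    rw [pow_succ', Matrix.mul_apply] at h
    obtain ⟨b, -, hb⟩ := Finset.exists_ne_zero_of_sum_ne_zero h
    have hb1 : (Q.submatrix (Subtype.val : {x // x ∈ I} → Fin n) Subtype.val) a b ≠ 0 :=
      fun h0 => hb (by rw [h0, zero_mul])
    have hb2 : ((Q.submatrix (Subtype.val : {x // x ∈ I} → Fin n) Subtype.val) ^ m) b ⟨i, hi⟩ ≠ 0 :=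
      fun h0 => hb (by rw [h0, mul_zero])
    obtain ⟨π, h0, hm, hI, hE⟩ := ih b hb2
    refine ⟨fun p => if p ≤ m then π p else a.val, by simp [h0], by simp, ?_, ?_⟩
    · intro p hp
      by_cases hpm : p ≤ m
      · simpa [hpm] using hI p hpm
      · simpa [hpm] using a.2
    · intro p hp
      by_cases hpm : p < m
      · have h1 : p ≤ m := hpm.le
        have h2 : p + 1 ≤ m := hpm
        simpa [h1, h2] using hE p hpm
      · have hpm' : p = m := by omega
        have : Q a.val (π m) ≠ 0 := by simpa [Matrix.submatrix_apply, hm] using hb1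
        simpa [hpm', hm] using this

/-- marginalization preserves absent chains. If `Q_{ji} = 0` and there is no
chain `i → π₁ → ... → π_ℓ → j` (`ℓ ≥ 1`) with all internal nodes in `I` (edges of the graph
being the nonzero entries of `Q`), then `[Q_{JI}(I - Q_{II})⁻¹]_{ji} = 0`. -/
theorem marginalization_preserves_zero {K : Type*} [Field K] {n : ℕ}
    (Q : Matrix (Fin n) (Fin n) K) (I J : Finset (Fin n)) (hdisj : Disjoint I J)
    (i j : Fin n) (hi : i ∈ I) (hj : j ∈ J)
    (hinv : IsUnit (1 - Q.submatrix (Subtype.val : {x // x ∈ I} → Fin n) (Subtype.val : {x // x ∈ I} → Fin n)))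
    (hQji : Q j i = 0)
    (hchain : ¬ ∃ ℓ : ℕ, 1 ≤ ℓ ∧ ∃ π : ℕ → Fin n, π 0 = i ∧ π (ℓ + 1) = j ∧
        (∀ p, 1 ≤ p → p ≤ ℓ → π p ∈ I) ∧ ∀ p ≤ ℓ, Q (π (p + 1)) (π p) ≠ 0) :
    ∑ a : {x // x ∈ I},
        Q j (a : Fin n) *
          ((1 - Q.submatrix (Subtype.val : {x // x ∈ I} → Fin n) (Subtype.val : {x // x ∈ I} → Fin n))⁻¹ a ⟨i, hi⟩)
      = 0 := by
  set A := Q.submatrix (Subtype.val : {x // x ∈ I} → Fin n) Subtype.val with hA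
  set B : Matrix {x // x ∈ I} {x // x ∈ I} K := 1 - A with hB
  -- key per-term vanishing
  have term_zero : ∀ (m : ℕ) (a : {x // x ∈ I}),
      Q j (a : Fin n) * ((A ^ m) a ⟨i, hi⟩) = 0 := by
    intro m a
    by_cases hAm : (A ^ m) a ⟨i, hi⟩ = 0
    · rw [hAm, mul_zero]
    by_cases hQ : Q j (a : Fin n) = 0
    · rw [hQ, zero_mul]
    exfalso
    obtain ⟨π, h0, hm, hI, hE⟩ := pow_entry_chain Q I i hi m a hAm
    rcases Nat.eq_zero_or_pos m with hm0 | hm1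
    · subst hm0
      rw [h0] at hm
      exact hQ (hm ▸ hQji)
    · refine hchain ⟨m, hm1, fun p => if p ≤ m then π p else j, by simp [h0], by simp, ?_, ?_⟩
      · intro p hp1 hpm
        simpa [hpm] using hI p hpm
      · intro p hp
        by_cases hpm : p < m
        · have h1 : p ≤ m := hpm.le
          have h2 : p + 1 ≤ m := hpm
          simpa [h1, h2] using hE p hpm
        · have hpm' : p = m := by omega
          have : Q j (π m) ≠ 0 := by rwa [hm]
          simpa [hpm'] using this
  -- express B⁻¹ as a polynomial in A
  have hdet : B.charpoly.coeff 0 ≠ 0 := by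
    intro h0
    have := Matrix.det_eq_sign_charpoly_coeff B
    rw [h0, mul_zero] at this
    exact ((Matrix.isUnit_iff_isUnit_det B).mp hinv).ne_zero this
  set c : K := (-(B.charpoly.coeff 0))⁻¹ with hc
  have key : B * (c • Polynomial.aeval B B.charpoly.divX) = 1 := by
    have h1 : Polynomial.aeval B B.charpoly = 0 := B.aeval_self_charpoly
    have h2 : Polynomial.X * B.charpoly.divX + Polynomial.C (B.charpoly.coeff 0)
        = B.charpoly := Polynomial.X_mul_divX_add B.charpoly
    have h3 : B * Polynomial.aeval B B.charpoly.divX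
        + (B.charpoly.coeff 0) • (1 : Matrix {x // x ∈ I} {x // x ∈ I} K) = 0 := by
      have h := congrArg (Polynomial.aeval B) h2
      rw [map_add, _root_.map_mul, Polynomial.aeval_X, Polynomial.aeval_C, h1,
        Algebra.algebraMap_eq_smul_one] at h
      exact h
    have h4 : B * Polynomial.aeval B B.charpoly.divX
        = (-(B.charpoly.coeff 0)) • (1 : Matrix {x // x ∈ I} {x // x ∈ I} K) := by
      rw [eq_neg_of_add_eq_zero_left h3]; rw [neg_smul]
    rw [Matrix.mul_smul, h4, smul_smul, hc,
      inv_mul_cancel₀ (by simpa using hdet), one_smul]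
  have hBinv : B⁻¹ = c • Polynomial.aeval B B.charpoly.divX :=
    Matrix.inv_eq_right_inv key
  have hcomp : Polynomial.aeval B B.charpoly.divX
      = Polynomial.aeval A (B.charpoly.divX.comp (1 - Polynomial.X)) := by
    rw [Polynomial.aeval_comp]
    congr 1
    simp [hB]
  set s : Polynomial K := B.charpoly.divX.comp (1 - Polynomial.X) with hs
  have hsum : Polynomial.aeval A s
      = ∑ m ∈ Finset.range (s.natDegree + 1), s.coeff m • A ^ m :=
    Polynomial.aeval_eq_sum_range A
  rw [hBinv, hcomp, hsum]
  refine Finset.sum_eq_zero fun a _ => ?_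
  simp only [Matrix.smul_apply, Matrix.sum_apply, smul_eq_mul]
  rw [mul_left_comm, Finset.mul_sum, Finset.sum_eq_zero, mul_zero]
  intro m _
  rw [mul_left_comm, term_zero m a, mul_zero]
end

section
/- Marginalization preserves transfer functions outside affected chains: let Q be an n×n matrix over a field, partitioned by disjoint sets I and J with I − Q_{II} invertible, and define Q'_{JJ} = Q_{JJ} + Q_{JI}(I − Q_{II})⁻¹ Q_{IJ}. Let j₁, j₂ ∈ J. If there is no chain j₁ → π₁ → ... → π_ℓ → j₂ (ℓ ≥ 1) with all internal nodes in I (in the graph whose edges are nonzero entries of Q), then [Q'_{JJ}]_{j₂ j₁} = Q_{j₂ j₁}. -/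
/-- Auxiliary reachability predicate: `x` is reachable from `j₁` via a chain whose
internal nodes (all nodes after `j₁` except possibly the last) lie in `I`, with all
edges nonzero in `Q`. -/
inductive ReachAux {K : Type*} [Field K] {n : ℕ} (Q : Matrix (Fin n) (Fin n) K)
    (I : Finset (Fin n)) (j₁ : Fin n) : Fin n → Prop
  | base (x : Fin n) : Q x j₁ ≠ 0 → ReachAux Q I j₁ x
  | step (x y : Fin n) : y ∈ I → ReachAux Q I j₁ y → Q x y ≠ 0 → ReachAux Q I j₁ x

lemma reachAux_chain {K : Type*} [Field K] {n : ℕ} {Q : Matrix (Fin n) (Fin n) K}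
    {I : Finset (Fin n)} {j₁ x : Fin n} (h : ReachAux Q I j₁ x) :
    ∃ ℓ : ℕ, ∃ π : ℕ → Fin n, π 0 = j₁ ∧ π (ℓ + 1) = x ∧
      (∀ p, 1 ≤ p → p ≤ ℓ → π p ∈ I) ∧ ∀ p ≤ ℓ, Q (π (p + 1)) (π p) ≠ 0 := by
  induction h with
  | base x hx =>
    refine ⟨0, fun p => if p = 0 then j₁ else x, by simp, by simp, by omega, ?_⟩
    intro p hp
    interval_cases p
    simpa using hx
  | step x y hyI hre hQ ih =>
    obtain ⟨ℓ, π, h0, h1, hI, hE⟩ := ih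
    refine ⟨ℓ + 1, fun p => if p = ℓ + 2 then x else π p, by simp [h0], by simp, ?_, ?_⟩
    · intro p hp1 hp2
      have hne : p ≠ ℓ + 2 := by omega
      simp only [hne, if_false]
      rcases Nat.lt_or_ge p (ℓ + 1) with h | h
      · exact hI p hp1 (by omega)
      · have : p = ℓ + 1 := by omega
        subst this; rw [h1]; exact hyI
    · intro p hp
      rcases Nat.lt_or_ge p (ℓ + 1) with h | h
      · have e1 : p + 1 ≠ ℓ + 2 := by omega
        have e2 : p ≠ ℓ + 2 := by omega
        simp only [e1, e2, if_false]
        exact hE p (by omega)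
      · have : p = ℓ + 1 := by omega
        subst this
        have e2 : ℓ + 1 ≠ ℓ + 2 := by omega
        simp only [if_pos rfl, e2, if_false, h1]
        exact hQ

/-- marginalization preserves transfer functions outside affected chains.
If there is no chain `j₁ → π₁ → ... → π_ℓ → j₂` (`ℓ ≥ 1`) with all internal nodes in `I`,
then `[Q_{JJ} + Q_{JI}(I - Q_{II})⁻¹ Q_{IJ}]_{j₂ j₁} = Q_{j₂ j₁}`. -/
theorem marginalization_preserves_transfer {K : Type*} [Field K] {n : ℕ}
    (Q : Matrix (Fin n) (Fin n) K) (I J : Finset (Fin n)) (hdisj : Disjoint I J)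
    (j₁ j₂ : Fin n) (hj₁ : j₁ ∈ J) (hj₂ : j₂ ∈ J)
    (hinv : IsUnit (1 - Q.submatrix (Subtype.val : {x // x ∈ I} → Fin n) (Subtype.val : {x // x ∈ I} → Fin n)))
    (hchain : ¬ ∃ ℓ : ℕ, 1 ≤ ℓ ∧ ∃ π : ℕ → Fin n, π 0 = j₁ ∧ π (ℓ + 1) = j₂ ∧
        (∀ p, 1 ≤ p → p ≤ ℓ → π p ∈ I) ∧ ∀ p ≤ ℓ, Q (π (p + 1)) (π p) ≠ 0) :
    Q j₂ j₁ + ∑ a : {x // x ∈ I}, ∑ b : {x // x ∈ I},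
        Q j₂ (a : Fin n) *
          ((1 - Q.submatrix (Subtype.val : {x // x ∈ I} → Fin n) (Subtype.val : {x // x ∈ I} → Fin n))⁻¹ a b) *
          Q (b : Fin n) j₁
      = Q j₂ j₁ := by
  set A : Matrix {x // x ∈ I} {x // x ∈ I} K :=
    Q.submatrix (Subtype.val : {x // x ∈ I} → Fin n) (Subtype.val : {x // x ∈ I} → Fin n) with hA
  set M : Matrix {x // x ∈ I} {x // x ∈ I} K := 1 - A with hM
  -- If x ∈ I is reachable from j₁, then Q j₂ x = 0 (else there would be a forbidden chain).
  have hzero : ∀ x : Fin n, x ∈ I → ReachAux Q I j₁ x → Q j₂ x = 0 := by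
    intro x hxI hre
    by_contra hne
    obtain ⟨ℓ, π, h0, h1, hI, hE⟩ := reachAux_chain hre
    refine hchain ⟨ℓ + 1, by omega, fun p => if p = ℓ + 2 then j₂ else π p,
      by simp [h0], by simp, ?_, ?_⟩
    · intro p hp1 hp2
      have hne2 : p ≠ ℓ + 2 := by omega
      simp only [hne2, if_false]
      rcases Nat.lt_or_ge p (ℓ + 1) with h | h
      · exact hI p hp1 (by omega)
      · have : p = ℓ + 1 := by omega
        subst this; rw [h1]; exact hxI
    · intro p hp
      rcases Nat.lt_or_ge p (ℓ + 1) with h | h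
      · have e1 : p + 1 ≠ ℓ + 2 := by omega
        have e2 : p ≠ ℓ + 2 := by omega
        simp only [e1, e2, if_false]
        exact hE p (by omega)
      · have : p = ℓ + 1 := by omega
        subst this
        have e2 : ℓ + 1 ≠ ℓ + 2 := by omega
        simp only [if_pos rfl, e2, if_false, h1]
        exact hne
  -- The submodule of vectors supported on reachable indices.
  let W : Submodule K ({x // x ∈ I} → K) :=
    { carrier := {w | ∀ x : {x // x ∈ I}, ¬ ReachAux Q I j₁ x.1 → w x = 0}
      add_mem' := fun ha hb x hx => by simp [ha x hx, hb x hx]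
      zero_mem' := fun x hx => rfl
      smul_mem' := fun c w hw x hx => by simp [hw x hx] }
  have hWmem : ∀ w : {x // x ∈ I} → K,
      w ∈ W ↔ ∀ x : {x // x ∈ I}, ¬ ReachAux Q I j₁ x.1 → w x = 0 := fun _ => Iff.rfl
  -- M preserves W.
  have hWinv : ∀ w ∈ W, M.mulVec w ∈ W := by
    intro w hw
    rw [hWmem] at hw ⊢
    intro x hx
    rw [Matrix.mulVec]
    simp only [dotProduct]
    apply Finset.sum_eq_zero
    intro y _
    rcases eq_or_ne (w y) 0 with h | h
    · simp [h]
    · have hreY : ReachAux Q I j₁ y.1 := by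
        by_contra hc; exact h (hw y hc)
      have hAxy : A x y = 0 := by
        by_contra hAne
        exact hx (ReachAux.step x.1 y.1 y.2 hreY hAne)
      have hxy : x ≠ y := by
        rintro rfl; exact hx hreY
      simp [hM, Matrix.sub_apply, Matrix.one_apply_ne hxy, hAxy]
  -- The source vector u b = Q b j₁ lies in W.
  set u : {x // x ∈ I} → K := fun b => Q b.1 j₁ with hu
  have huW : u ∈ W := by
    rw [hWmem]
    intro x hx
    by_contra hne
    exact hx (ReachAux.base x.1 hne)
  -- M restricted to W is injective hence surjective, so M⁻¹ u ∈ W.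
  have hdet : IsUnit M.det := (Matrix.isUnit_iff_isUnit_det M).mp hinv
  have hMinj : Function.Injective M.mulVec := by
    intro v₁ v₂ h
    have := congrArg (M⁻¹.mulVec) h
    rwa [Matrix.mulVec_mulVec, Matrix.mulVec_mulVec, Matrix.nonsing_inv_mul M hdet,
      Matrix.one_mulVec, Matrix.one_mulVec] at this
  let g : W →ₗ[K] W := (Matrix.mulVecLin M).restrict hWinv
  have hginj : Function.Injective g := by
    intro ⟨v₁, hv₁⟩ ⟨v₂, hv₂⟩ h
    have h' : M.mulVec v₁ = M.mulVec v₂ := congrArg Subtype.val h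
    exact Subtype.ext (hMinj h')
  have hgsurj : Function.Surjective g := (LinearMap.injective_iff_surjective).mp hginj
  obtain ⟨⟨w, hwW⟩, hgw⟩ := hgsurj ⟨u, huW⟩
  have hMw : M.mulVec w = u := congrArg Subtype.val hgw
  have hMinvU : M⁻¹.mulVec u = w := by
    rw [← hMw, Matrix.mulVec_mulVec, Matrix.nonsing_inv_mul M hdet, Matrix.one_mulVec]
  -- Now compute the sum.
  have hsum : ∑ a : {x // x ∈ I}, ∑ b : {x // x ∈ I},
      Q j₂ (a : Fin n) * (M⁻¹ a b) * Q (b : Fin n) j₁ = 0 := by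
    have hrw : ∀ a : {x // x ∈ I},
        ∑ b : {x // x ∈ I}, Q j₂ (a : Fin n) * (M⁻¹ a b) * Q (b : Fin n) j₁
          = Q j₂ (a : Fin n) * w a := by
      intro a
      rw [← hMinvU, Matrix.mulVec, dotProduct, Finset.mul_sum]
      exact Finset.sum_congr rfl fun b _ => by ring
    rw [Finset.sum_congr rfl fun a _ => hrw a]
    apply Finset.sum_eq_zero
    intro a _
    rcases eq_or_ne (w a) 0 with h | h
    · simp [h]
    · have hreA : ReachAux Q I j₁ a.1 := by
        by_contra hc; exact h (hwW a hc)
      rw [hzero a.1 a.2 hreA, zero_mul]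
  rw [hsum, add_zero]
end

section
/- In a directed graph G, let I be a set of vertices, fix i ∈ I and let Ī = I \ {i}. Form the graph G' obtained from G by marginalizing Ī (G' has vertex set V \ Ī; it has an edge a → b whenever G has an edge a → b with a,b ∉ Ī, or a chain a → π₁ → ... → π_ℓ → b with all internal nodes in Ī). Then the Markov blanket of {i} in G' is contained in the Markov blanket of I in G. -/
/-- after marginalizing `Ī = I \ {i}` (replacing chains through `Ī` by direct
edges), the Markov blanket of `{i}` in the new graph is contained in the Markov blanket of
`I` in the original graph. -/
theorem markovBlanket_marginalization_subset {V : Type*} (E : V → V → Prop)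
    (I : Set V) (i : V) (hi : i ∈ I)
    (E' : V → V → Prop)
    (hE' : ∀ a b, E' a b ↔ a ∉ I \ {i} ∧ b ∉ I \ {i} ∧
        (E a b ∨ ∃ ℓ : ℕ, 1 ≤ ℓ ∧ ∃ π : ℕ → V, π 0 = a ∧ π (ℓ + 1) = b ∧
          (∀ p, 1 ≤ p → p ≤ ℓ → π p ∈ I \ {i}) ∧ ∀ p ≤ ℓ, E (π p) (π (p + 1)))) :
    ∀ x : V, x ≠ i →
      (E' x i ∨ E' i x ∨ ∃ c, E' i c ∧ E' x c) →
      x ∉ I ∧ ((∃ s ∈ I, E x s) ∨ (∃ s ∈ I, E s x) ∨ ∃ c, (∃ s ∈ I, E s c) ∧ E x c) := by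
  intro x hx h
  have notI : x ∉ I \ {i} → x ∉ I := by
    intro hn hxI
    exact hn ⟨hxI, hx⟩
  rcases h with h | h | ⟨c, hic, hxc⟩
  · rw [hE'] at h
    obtain ⟨hx1, _, hE | ⟨ℓ, hℓ, π, h0, hend, hmid, hch⟩⟩ := h
    · exact ⟨notI hx1, Or.inl ⟨i, hi, hE⟩⟩
    · refine ⟨notI hx1, Or.inl ⟨π 1, (hmid 1 le_rfl hℓ).1, ?_⟩⟩
      have := hch 0 (Nat.zero_le _)
      rwa [h0] at this
  · rw [hE'] at h
    obtain ⟨_, hx2, hE | ⟨ℓ, hℓ, π, h0, hend, hmid, hch⟩⟩ := h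
    · exact ⟨notI hx2, Or.inr (Or.inl ⟨i, hi, hE⟩)⟩
    · refine ⟨notI hx2, Or.inr (Or.inl ⟨π ℓ, (hmid ℓ hℓ le_rfl).1, ?_⟩)⟩
      have := hch ℓ le_rfl
      rwa [hend] at this
  · rw [hE'] at hxc hic
    obtain ⟨hx1, _, hEx | ⟨ℓ, hℓ, π, h0, hend, hmid, hch⟩⟩ := hxc
    · -- direct edge x → c; get s ∈ I with E s c from E' i c
      refine ⟨notI hx1, Or.inr (Or.inr ⟨c, ?_, hEx⟩)⟩
      obtain ⟨_, _, hEi | ⟨ℓ, hℓ, π, h0, hend, hmid, hch⟩⟩ := hic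
      · exact ⟨i, hi, hEi⟩
      · refine ⟨π ℓ, (hmid ℓ hℓ le_rfl).1, ?_⟩
        have := hch ℓ le_rfl
        rwa [hend] at this
    · -- chain from x through I \ {i}: x has a child π 1 ∈ I
      refine ⟨notI hx1, Or.inl ⟨π 1, (hmid 1 le_rfl hℓ).1, ?_⟩⟩
      have := hch 0 (Nat.zero_le _)
      rwa [h0] at this
end
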